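/- arXiv:2008.09678 — 2 statements merged into one kernel-verified Lean document; each statement's English description precedes it below -/
import Mathlib

section
/- Let 0 → A →g B →h C → 0 be a short exact sequence of abelian groups. Let g_f : A_f → B_f be the map induced by g on torsion-free quotients, let q : B_f → B_f/g_f(A_f) be the quotient map, and let v : C → B_f/g_f(A_f) be the unique homomorphism with v ∘ h = q ∘ π_B (where π_B : B → B_f is the quotient map). Then the map v_f : C_f → (B_f/g_f(A_f))_f induced by v on torsion-free quotients is an isomorphism. -/
/-!
The map `v` is surjective because `q ∘ π_B = v ∘ h` is, so `v_f` is surjective. Its kernel is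
`h(T(B))`: if `v (h b) = 0` then `π_B b = g_f (π_A a) = π_B (g a)`, so `b - g a` is torsion and
`h b = h (b - g a)`. A map with torsion kernel reflects torsion (`n • v c = 0` puts `n • c` in the
kernel), which makes `v_f` injective.
-/

open Submodule LinearMap

namespace Submodule

variable {R M N : Type*} [CommRing R] [AddCommGroup M] [Module R M] [AddCommGroup N] [Module R N]

theorem torsion_le_comap_torsion (f : M →ₗ[R] N) : torsion R M ≤ (torsion R N).comap f := by
  rintro x ⟨a, hax⟩
  exact ⟨a, by rw [← map_smul_of_tower, hax, map_zero]⟩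

theorem comap_torsion_le_of_ker_le {f : M →ₗ[R] N} (hf : ker f ≤ torsion R M) :
    (torsion R N).comap f ≤ torsion R M := by
  rintro x ⟨a, hax⟩
  obtain ⟨b, hbx⟩ := hf (show a • x ∈ ker f by rw [mem_ker, map_smul_of_tower]; exact hax)
  exact ⟨b * a, by rw [Submonoid.smul_def, Submonoid.coe_mul, mul_smul]; exact hbx⟩

theorem injective_of_comp_mkQ_eq {P : Submodule R M} {Q : Submodule R N} {f : M →ₗ[R] N}
    {f' : (M ⧸ P) →ₗ[R] (N ⧸ Q)} (hf' : f' ∘ₗ P.mkQ = Q.mkQ ∘ₗ f) (hPQ : Q.comap f ≤ P) :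
    Function.Injective f' := by
  refine (injective_iff_map_eq_zero f').mpr fun x hx => ?_
  obtain ⟨m, rfl⟩ := P.mkQ_surjective x
  rw [← comp_apply, hf', comp_apply, mkQ_apply, Quotient.mk_eq_zero] at hx
  rw [mkQ_apply, Quotient.mk_eq_zero]
  exact hPQ hx

theorem surjective_of_comp_mkQ_eq {P : Submodule R M} {Q : Submodule R N} {f : M →ₗ[R] N}
    {f' : (M ⧸ P) →ₗ[R] (N ⧸ Q)} (hf' : f' ∘ₗ P.mkQ = Q.mkQ ∘ₗ f) (hf : Function.Surjective f) :
    Function.Surjective f' :=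
  Function.Surjective.of_comp (g := P.mkQ) <| by
    rw [← coe_comp, hf', coe_comp]
    exact Q.mkQ_surjective.comp hf

end Submodule

variable {R A B C : Type*} [CommRing R] [AddCommGroup A] [Module R A] [AddCommGroup B]
  [Module R B] [AddCommGroup C] [Module R C]

theorem ker_le_torsion_of_comp_mkQ_eq {g : A →ₗ[R] B} {h : B →ₗ[R] C}
    (hh : Function.Surjective h) (hgh : range g ≤ ker h)
    {gf : (A ⧸ torsion R A) →ₗ[R] (B ⧸ torsion R B)}
    (hgf : gf ∘ₗ (torsion R A).mkQ = (torsion R B).mkQ ∘ₗ g)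
    {v : C →ₗ[R] ((B ⧸ torsion R B) ⧸ range gf)}
    (hv : v ∘ₗ h = (range gf).mkQ ∘ₗ (torsion R B).mkQ) :
    ker v ≤ torsion R C := by
  intro c hc
  obtain ⟨b, rfl⟩ := hh c
  have hb : (torsion R B).mkQ b ∈ range gf := by
    rw [mem_ker, ← comp_apply, hv, comp_apply, mkQ_apply, Quotient.mk_eq_zero] at hc
    exact hc
  obtain ⟨af, haf⟩ := hb
  obtain ⟨a, rfl⟩ := (torsion R A).mkQ_surjective af
  have hba : b - g a ∈ torsion R B := by
    rw [← comp_apply, hgf, comp_apply] at haf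
    rw [← Quotient.mk_eq_zero, Quotient.mk_sub]
    exact sub_eq_zero.mpr haf.symm
  have hga : h (g a) = 0 := hgh ⟨a, rfl⟩
  rw [show h b = h (b - g a) by rw [map_sub, hga, sub_zero]]
  exact torsion_le_comap_torsion h hba

theorem stmt0_general {A B C : Type} [AddCommGroup A] [AddCommGroup B] [AddCommGroup C]
    (g : A →ₗ[ℤ] B) (h : B →ₗ[ℤ] C)
    (hh : Function.Surjective h)
    (hex : LinearMap.range g = LinearMap.ker h)
    (gf : (A ⧸ torsion ℤ A) →ₗ[ℤ] (B ⧸ torsion ℤ B))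
    (hgf : gf ∘ₗ (torsion ℤ A).mkQ = (torsion ℤ B).mkQ ∘ₗ g)
    (v : C →ₗ[ℤ] ((B ⧸ torsion ℤ B) ⧸ LinearMap.range gf))
    (hv : v ∘ₗ h = (LinearMap.range gf).mkQ ∘ₗ (torsion ℤ B).mkQ)
    (vf : (C ⧸ torsion ℤ C) →ₗ[ℤ]
      (((B ⧸ torsion ℤ B) ⧸ LinearMap.range gf) ⧸
        torsion ℤ ((B ⧸ torsion ℤ B) ⧸ LinearMap.range gf)))
    (hvf : vf ∘ₗ (torsion ℤ C).mkQ =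
      (torsion ℤ ((B ⧸ torsion ℤ B) ⧸ LinearMap.range gf)).mkQ ∘ₗ v) :
    Function.Bijective vf := by
  have hv_surj : Function.Surjective v := Function.Surjective.of_comp (g := h) <| by
    rw [← coe_comp, hv, coe_comp]
    exact (range gf).mkQ_surjective.comp (torsion ℤ B).mkQ_surjective
  have hker : ker v ≤ torsion ℤ C := ker_le_torsion_of_comp_mkQ_eq hh hex.le hgf hv
  exact ⟨injective_of_comp_mkQ_eq hvf (comap_torsion_le_of_ker_le hker),
    surjective_of_comp_mkQ_eq hvf hv_surj⟩

/-- Let `0 → A →g B →h C → 0` be a short exact sequence of abelian groups (viewed as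
`ℤ`-modules).  Let `gf : A_f → B_f` be the map induced by `g` on torsion-free quotients
(characterized by `gf ∘ π_A = π_B ∘ g`), let `q` be the quotient map
`B_f → B_f / gf(A_f)`, and let `v : C → B_f / gf(A_f)` be the unique homomorphism with
`v ∘ h = q ∘ π_B`.  Then the map `vf : C_f → (B_f / gf(A_f))_f` induced by `v` on
torsion-free quotients (characterized by `vf ∘ π_C = π ∘ v`) is an isomorphism. -/
theorem stmt0 {A B C : Type} [AddCommGroup A] [AddCommGroup B] [AddCommGroup C]
    (g : A →ₗ[ℤ] B) (h : B →ₗ[ℤ] C)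
    (hg : Function.Injective g) (hh : Function.Surjective h)
    (hex : LinearMap.range g = LinearMap.ker h)
    (gf : (A ⧸ torsion ℤ A) →ₗ[ℤ] (B ⧸ torsion ℤ B))
    (hgf : gf ∘ₗ (torsion ℤ A).mkQ = (torsion ℤ B).mkQ ∘ₗ g)
    (v : C →ₗ[ℤ] ((B ⧸ torsion ℤ B) ⧸ LinearMap.range gf))
    (hv : v ∘ₗ h = (LinearMap.range gf).mkQ ∘ₗ (torsion ℤ B).mkQ)
    (vf : (C ⧸ torsion ℤ C) →ₗ[ℤ]
      (((B ⧸ torsion ℤ B) ⧸ LinearMap.range gf) ⧸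
        torsion ℤ ((B ⧸ torsion ℤ B) ⧸ LinearMap.range gf)))
    (hvf : vf ∘ₗ (torsion ℤ C).mkQ =
      (torsion ℤ ((B ⧸ torsion ℤ B) ⧸ LinearMap.range gf)).mkQ ∘ₗ v) :
    Function.Bijective vf :=
  stmt0_general g h hh hex gf hgf v hv vf hvf
end

section
/- Let A = ℤ[a,b]/(a², b², 2ab). Then the torsion subgroup of the underlying abelian group of A is the ideal generated by ab (an element of order 2), so A_f = A/T(A) is isomorphic to ℤ[a,b]/(a², b², ab), and there exists no ring homomorphism s : A_f → A such that π ∘ s = id_{A_f}, where π : A → A_f is the quotient map. In other words, the ring A is not free split. -/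
open MvPolynomial Submodule

/-- The ideal `(a², b², 2ab)` of `ℤ[a,b]`, with `a = X 0`, `b = X 1`. -/
noncomputable def Iab : Ideal (MvPolynomial (Fin 2) ℤ) :=
  Ideal.span {X 0 ^ 2, X 1 ^ 2, 2 * (X 0 * X 1)}

/-- The ring `A = ℤ[a,b]/(a², b², 2ab)`. -/
abbrev Aex : Type := MvPolynomial (Fin 2) ℤ ⧸ Iab

/-- The class of `ab` in `A`. -/
noncomputable def abElt : Aex := Ideal.Quotient.mk Iab (X 0 * X 1)

/-- The ideal of `A` generated by (the class of) `ab`. -/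
noncomputable def Jab : Ideal Aex := Ideal.span {abElt}

/-- The torsion-free quotient `A_f = A/T(A) = A/(ab)`. -/
abbrev Afex : Type := Aex ⧸ Jab

/-!
Modulo `ab` the relations of `A` become `(a, b)² = 0`, so `A_f = ℤ[a,b]/(a,b)²` is the trivial
square-zero extension `ℤ ⊕ ℤ²`, which is torsion-free; since `2ab = 0`, the torsion of `A` is
exactly `(ab)`. The element `ab` is nonzero: `a ↦ ε`, `b ↦ ε'` maps `A` to `𝔽₂[ε][ε']` and `ab`
to `εε' ≠ 0`. A ring section `s` of `A → A_f` sends `ā`, `b̄` to lifts `a + u ab`, `b + v ab`;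
as `ab` is killed by `a`, `b` and itself, their product is `ab`, whereas `ā b̄ = 0` makes it
`s 0 = 0`.
-/

namespace TrivSqZeroExt

instance {R M : Type*} [AddMonoid R] [AddMonoid M] [IsAddTorsionFree R] [IsAddTorsionFree M] :
    IsAddTorsionFree (TrivSqZeroExt R M) :=
  inferInstanceAs (IsAddTorsionFree (R × M))

end TrivSqZeroExt

section SquareZero

variable (R : Type*) [CommRing R]

local notation "Q" => MvPolynomial (Fin 2) R ⧸
  Ideal.span {(MvPolynomial.X 0 : MvPolynomial (Fin 2) R) ^ 2, MvPolynomial.X 1 ^ 2,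
    MvPolynomial.X 0 * MvPolynomial.X 1}

theorem mk_X_mul_mk_X (i j : Fin 2) :
    (Ideal.Quotient.mk _ (X i) : Q) * Ideal.Quotient.mk _ (X j) = 0 := by
  rw [← map_mul, Ideal.Quotient.eq_zero_iff_mem]
  apply Ideal.subset_span
  fin_cases i <;> fin_cases j <;> simp [sq, mul_comm]

noncomputable def quotToTrivSqZeroExt : Q →ₐ[R] TrivSqZeroExt R (R × R) :=
  let f : MvPolynomial (Fin 2) R →ₐ[R] TrivSqZeroExt R (R × R) :=
    aeval ![TrivSqZeroExt.inr (1, 0), TrivSqZeroExt.inr (0, 1)]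
  Ideal.Quotient.liftₐ _ f fun _ hp =>
    (Ideal.span_le (I := RingHom.ker f)).mpr (by rintro _ (rfl | rfl | rfl) <;> simp [f, sq]) hp

@[simp]
theorem quotToTrivSqZeroExt_mk (p : MvPolynomial (Fin 2) R) :
    quotToTrivSqZeroExt R (Ideal.Quotient.mk _ p) =
      aeval ![TrivSqZeroExt.inr (1, 0), TrivSqZeroExt.inr (0, 1)] p :=
  rfl

noncomputable def trivSqZeroExtToQuot : TrivSqZeroExt R (R × R) →ₐ[R] Q :=
  TrivSqZeroExt.liftEquivOfComm
    ⟨(LinearMap.toSpanSingleton R Q (Ideal.Quotient.mk _ (X 0))).coprod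
      (LinearMap.toSpanSingleton R Q (Ideal.Quotient.mk _ (X 1))), by
      rintro ⟨x₀, x₁⟩ ⟨y₀, y₁⟩
      simp only [LinearMap.coprod_apply, LinearMap.toSpanSingleton_apply, add_mul, mul_add,
        smul_mul_smul_comm, mk_X_mul_mk_X, smul_zero, add_zero]⟩

noncomputable def quotEquivTrivSqZeroExt : Q ≃ₐ[R] TrivSqZeroExt R (R × R) :=
  AlgEquiv.ofAlgHom (quotToTrivSqZeroExt R) (trivSqZeroExtToQuot R)
    (TrivSqZeroExt.algHom_ext fun ⟨x, y⟩ => by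
      simp [trivSqZeroExtToQuot, ← TrivSqZeroExt.inr_smul, ← TrivSqZeroExt.inr_add])
    (Ideal.Quotient.algHom_ext R <| MvPolynomial.algHom_ext fun i => by
      fin_cases i <;> simp [trivSqZeroExtToQuot])

end SquareZero

theorem torsion_int_eq_span_singleton {R : Type*} [CommRing R] {z : R} {n : ℕ} (hn : n ≠ 0)
    (hz : n • z = 0) [IsAddTorsionFree (R ⧸ Ideal.span {z})] :
    (torsion ℤ R : Set R) = Ideal.span {z} := by
  ext x
  simp only [SetLike.mem_coe, mem_torsion_iff]
  constructor
  · rintro ⟨⟨m, hm⟩, hmx⟩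
    have hmx : m • Ideal.Quotient.mk (Ideal.span {z}) x = 0 := by
      rw [← map_zsmul, show m • x = 0 from hmx, map_zero]
    exact Ideal.Quotient.eq_zero_iff_mem.mp
      ((smul_eq_zero.mp hmx).resolve_left (nonZeroDivisors.ne_zero hm))
  · intro hx
    obtain ⟨c, rfl⟩ := Ideal.mem_span_singleton'.mp hx
    refine ⟨⟨n, mem_nonZeroDivisors_of_ne_zero (by exact_mod_cast hn)⟩, ?_⟩
    change (n : ℤ) • (c * z) = 0
    rw [natCast_zsmul, ← mul_smul_comm, hz, mul_zero]

theorem eq_zero_of_rightInverse_mk_span_singleton {R F : Type*} [CommRing R] {a b z : R}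
    [FunLike F (R ⧸ Ideal.span {z}) R] [MonoidWithZeroHomClass F (R ⧸ Ideal.span {z}) R]
    (hab : a * b = z) (ha : a * z = 0) (hb : b * z = 0) (s : F)
    (hs : Function.RightInverse s (Ideal.Quotient.mk (Ideal.span {z}))) : z = 0 := by
  set sa := s (Ideal.Quotient.mk _ a)
  set sb := s (Ideal.Quotient.mk _ b)
  obtain ⟨u, hu⟩ := Ideal.mem_span_singleton'.mp <| Ideal.Quotient.eq.mp <| hs <|
    Ideal.Quotient.mk _ a
  obtain ⟨v, hv⟩ := Ideal.mem_span_singleton'.mp <| Ideal.Quotient.eq.mp <| hs <|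
    Ideal.Quotient.mk _ b
  have hsa : sa = a + u * z := by linear_combination -hu
  have hsb : sb = b + v * z := by linear_combination -hv
  have hzz : z * z = 0 := by linear_combination -z * hab + a * hb
  calc z = a * b := hab.symm
    _ = (a + u * z) * (b + v * z) := by linear_combination -v * ha - u * hb - u * v * hzz
    _ = s (Ideal.Quotient.mk _ z) := by rw [← hsa, ← hsb, ← map_mul, ← map_mul, hab]
    _ = 0 := by rw [Ideal.Quotient.eq_zero_iff_mem.mpr (Ideal.mem_span_singleton_self z), map_zero]

noncomputable def aElt : Aex := Ideal.Quotient.mk Iab (X 0)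

noncomputable def bElt : Aex := Ideal.Quotient.mk Iab (X 1)

theorem aElt_mul_bElt : aElt * bElt = abElt := (map_mul _ _ _).symm

theorem aElt_mul_abElt : aElt * abElt = 0 := by
  rw [aElt, abElt, ← map_mul, Ideal.Quotient.eq_zero_iff_mem,
    show (X 0 * (X 0 * X 1) : MvPolynomial (Fin 2) ℤ) = X 1 * X 0 ^ 2 by ring]
  exact Ideal.mul_mem_left _ _ (Ideal.subset_span (by simp))

theorem bElt_mul_abElt : bElt * abElt = 0 := by
  rw [bElt, abElt, ← map_mul, Ideal.Quotient.eq_zero_iff_mem,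
    show (X 1 * (X 0 * X 1) : MvPolynomial (Fin 2) ℤ) = X 0 * X 1 ^ 2 by ring]
  exact Ideal.mul_mem_left _ _ (Ideal.subset_span (by simp))

theorem two_nsmul_abElt : 2 • abElt = 0 := by
  rw [abElt, ← map_nsmul, nsmul_eq_mul, Nat.cast_ofNat, Ideal.Quotient.eq_zero_iff_mem]
  exact Ideal.subset_span (by simp)

open DualNumber in
theorem abElt_ne_zero : abElt ≠ 0 := by
  let φ : MvPolynomial (Fin 2) ℤ →ₐ[ℤ] (ZMod 2)[ε][ε] :=
    aeval (![ε, TrivSqZeroExt.inl ε] : Fin 2 → (ZMod 2)[ε][ε])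
  have hker : Iab ≤ RingHom.ker φ := by
    have two_eq_zero : (2 : (ZMod 2)[ε][ε]) = 0 := by
      have h : (2 : ZMod 2) = 0 := rfl
      simpa only [h, map_zero] using (map_ofNat (algebraMap (ZMod 2) (ZMod 2)[ε][ε]) 2).symm
    rw [Iab, Ideal.span_le]
    rintro x (rfl | rfl | rfl) <;>
      simp [φ, sq, two_eq_zero, ← TrivSqZeroExt.inl_mul, eps_mul_eps]
  intro h
  have hφ : φ (X 0 * X 1) = 0 := hker (Ideal.Quotient.eq_zero_iff_mem.mp h)
  simpa [φ, TrivSqZeroExt.ext_iff] using congrArg TrivSqZeroExt.snd hφ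

theorem Jab_eq_map : Jab = (Ideal.span {(X 0 * X 1 : MvPolynomial (Fin 2) ℤ)}).map
    (Ideal.Quotient.mk Iab) := by
  rw [Jab, Ideal.map_span, Set.image_singleton, abElt]

theorem Iab_sup_span_eq :
    Iab ⊔ Ideal.span {(X 0 * X 1 : MvPolynomial (Fin 2) ℤ)} =
      Ideal.span {X 0 ^ 2, X 1 ^ 2, X 0 * X 1} := by
  have hab : (X 0 * X 1 : MvPolynomial (Fin 2) ℤ) ∈ Ideal.span {X 0 ^ 2, X 1 ^ 2, X 0 * X 1} :=
    Ideal.subset_span (by simp)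
  refine le_antisymm (sup_le ?_ ((Ideal.span_singleton_le_iff_mem _).mpr hab)) ?_
  · rw [Iab, Ideal.span_le]
    rintro x (rfl | rfl | rfl)
    · exact Ideal.subset_span (by simp)
    · exact Ideal.subset_span (by simp)
    · exact Ideal.mul_mem_left _ 2 hab
  · rw [Ideal.span_le]
    rintro x (rfl | rfl | rfl)
    · exact Ideal.mem_sup_left (Ideal.subset_span (by simp))
    · exact Ideal.mem_sup_left (Ideal.subset_span (by simp))
    · exact Ideal.mem_sup_right (Ideal.mem_span_singleton_self _)

noncomputable def afexEquiv :
    Afex ≃+* MvPolynomial (Fin 2) ℤ ⧸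
      Ideal.span {(X 0 : MvPolynomial (Fin 2) ℤ) ^ 2, X 1 ^ 2, X 0 * X 1} :=
  (Ideal.quotEquivOfEq Jab_eq_map).trans
    ((DoubleQuot.quotQuotEquivQuotSup _ _).trans (Ideal.quotEquivOfEq Iab_sup_span_eq))

-- Stated for `span {abElt}` rather than `Jab`, which instance search does not unfold.
instance : IsAddTorsionFree (Aex ⧸ Ideal.span {abElt}) :=
  let e : Afex ≃+* TrivSqZeroExt ℤ (ℤ × ℤ) :=
    afexEquiv.trans (quotEquivTrivSqZeroExt ℤ).toRingEquiv
  e.injective.isAddTorsionFree e.toAddMonoidHom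

/-- Let `A = ℤ[a,b]/(a², b², 2ab)`.  Then the torsion subgroup of the underlying abelian
group of `A` is the ideal generated by `ab`, the element `ab` has additive order `2`,
the torsion-free quotient `A_f = A/T(A)` is isomorphic to `ℤ[a,b]/(a², b², ab)`, and
there exists no ring homomorphism `s : A_f → A` such that `π ∘ s = id`, where
`π : A → A_f` is the quotient map.  In other words, the ring `A` is not free split. -/
theorem stmt11 :
    ((torsion ℤ Aex : Set Aex) = (Jab : Set Aex)) ∧
    addOrderOf abElt = 2 ∧
    Nonempty (Afex ≃+*
      (MvPolynomial (Fin 2) ℤ ⧸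
        Ideal.span {(X 0 : MvPolynomial (Fin 2) ℤ) ^ 2, X 1 ^ 2, X 0 * X 1})) ∧
    ¬ ∃ s : Afex →+* Aex, (Ideal.Quotient.mk Jab).comp s = RingHom.id Afex := by
  refine ⟨torsion_int_eq_span_singleton two_ne_zero two_nsmul_abElt, ?_, ⟨afexEquiv⟩, ?_⟩
  · have : Fact (Nat.Prime 2) := ⟨Nat.prime_two⟩
    exact addOrderOf_eq_prime two_nsmul_abElt abElt_ne_zero
  · rintro ⟨s, hs⟩
    exact abElt_ne_zero <| eq_zero_of_rightInverse_mk_span_singleton aElt_mul_bElt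
      aElt_mul_abElt bElt_mul_abElt s (RingHom.congr_fun hs)
end
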